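/- Let m ≥ 1 and let H(ξ) be any measurable function on the unit cube D = {ξ ∈ ℝⁿ : |ξ_j| ≤ 1 for all j} of the form Ĥ(ξ) = w(ξ)·ĥ(ξ) with |w(ξ)| = (1+S|ξ|)^{-m/(2(m+2))} for a parameter S ≥ 0. If ĥ(ξ) = ξ₁^l for l ∈ ℕ, then ∫_D ξ₁^{2l}(1+S|ξ|)^{-m/(m+2)} dξ ≤ C_m (1+S)^{-m/(m+2)} ∫_D ξ₁^{2l} dξ, with C_m = (m+2)/2 depending only on m (in particular independent of l and n beyond C_m = 1/(1 - m/(m+2)) = (m+2)/2). -/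

import Mathlib

open MeasureTheory Set

/-!
Since `|ξ₁| ≤ 1` and `|ξ₁| ≤ ‖ξ‖` on the cube, `1 + S‖ξ‖ ≥ |ξ₁| (1 + S)`, so with `q = m/(m+2)`
the integrand is at most `(1 + S)^(-q) |ξ₁|^(2l-q)`. Both sides now depend on `ξ₁` alone, and the
cube integrals reduce to `∫₋₁¹ |t|^s dt = 2/(s+1)`. The comparison
`2/(2l+1-q) ≤ (1-q)⁻¹ · 2/(2l+1)` holds uniformly in `l`, and `(1-q)⁻¹ = (m+2)/2`.
-/

theorem integral_abs_rpow_Icc_neg_one_one {s : ℝ} (hs : -1 < s) :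
    ∫ t in Icc (-1 : ℝ) 1, |t| ^ s = 2 / (s + 1) := by
  have hfold : (Icc (-1 : ℝ) 1).indicator (fun t => |t| ^ s)
      = fun t => (Iic (1 : ℝ)).indicator (fun t => t ^ s) |t| := by
    ext t
    by_cases ht : |t| ≤ 1
    · rw [indicator_of_mem (show t ∈ Icc (-1) 1 from abs_le.mp ht),
        indicator_of_mem (show |t| ∈ Iic 1 from ht)]
    · rw [indicator_of_notMem (show t ∉ Icc (-1) 1 from mt abs_le.mpr ht),
        indicator_of_notMem (show |t| ∉ Iic 1 from ht)]
  rw [← integral_indicator measurableSet_Icc, hfold, integral_comp_abs,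
    setIntegral_indicator measurableSet_Iic, Ioi_inter_Iic,
    ← intervalIntegral.integral_of_le zero_le_one, integral_rpow (Or.inl hs), Real.one_rpow,
    Real.zero_rpow (by linarith)]
  ring

theorem integrableOn_abs_rpow_Icc_neg_one_one {s : ℝ} (hs : -1 < s) :
    IntegrableOn (fun t : ℝ => |t| ^ s) (Icc (-1) 1) :=
  .of_integral_ne_zero <| by
    rw [integral_abs_rpow_Icc_neg_one_one hs]
    exact (div_pos two_pos (by linarith)).ne'

theorem rpow_mul_one_add_mul_rpow_neg_le {a N S k q : ℝ} (ha : 0 < a) (ha1 : a ≤ 1) (haN : a ≤ N)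
    (hS : 0 ≤ S) (hq : 0 ≤ q) :
    a ^ k * (1 + S * N) ^ (-q) ≤ (1 + S) ^ (-q) * a ^ (k - q) := by
  have hle : a * (1 + S) ≤ 1 + S * N := by nlinarith
  calc a ^ k * (1 + S * N) ^ (-q)
      ≤ a ^ k * (a * (1 + S)) ^ (-q) := by
        gcongr ?_ * ?_
        exact Real.rpow_le_rpow_of_nonpos (by positivity) hle (neg_nonpos.mpr hq)
    _ = (1 + S) ^ (-q) * a ^ (k - q) := by
        rw [Real.mul_rpow ha.le (by positivity), sub_eq_add_neg, Real.rpow_add ha]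
        ring

theorem two_div_sub_add_one_le {q x : ℝ} (hq0 : 0 ≤ q) (hq1 : q < 1) (hx : 0 ≤ x) :
    2 / (x - q + 1) ≤ (1 - q)⁻¹ * (2 / (x + 1)) := by
  rw [← div_eq_inv_mul, div_div, div_le_div_iff₀ (by linarith) (by positivity)]
  nlinarith [mul_nonneg hx hq0]

section Cube

variable {ι : Type*} [Fintype ι]

theorem map_eval_volume_restrict_cube [DecidableEq ι] (i : ι) :
    (volume.restrict {ξ : EuclideanSpace ℝ ι | ∀ j, |ξ j| ≤ 1}).map (fun ξ => ξ i)
      = (2 ^ (Fintype.card ι - 1) : ENNReal) • volume.restrict (Icc (-1 : ℝ) 1) := by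
  have hcube : {ξ : EuclideanSpace ℝ ι | ∀ j, |ξ j| ≤ 1}
      = WithLp.ofLp ⁻¹' univ.pi fun _ => Icc (-1 : ℝ) 1 := by
    ext ξ; simp only [mem_preimage, mem_univ_pi, mem_Icc, ← abs_le]; rfl
  have hpres := (PiLp.volume_preserving_ofLp ι).restrict_preimage
    (MeasurableSet.univ_pi fun _ => measurableSet_Icc (a := (-1 : ℝ)) (b := 1))
  rw [hcube, show (fun ξ : EuclideanSpace ℝ ι => ξ i) = Function.eval i ∘ WithLp.ofLp from rfl,
    ← Measure.map_map (measurable_pi_apply i) hpres.measurable, hpres.map_eq, volume_pi,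
    Measure.restrict_pi_pi, Measure.pi_map_eval]
  simp [Finset.card_erase_of_mem, one_add_one_eq_two]

theorem setIntegral_cube_comp_eval (i : ι) {G : ℝ → ℝ}
    (hG : AEStronglyMeasurable G (volume.restrict (Icc (-1 : ℝ) 1))) :
    ∫ ξ in {ξ : EuclideanSpace ℝ ι | ∀ j, |ξ j| ≤ 1}, G (ξ i)
      = 2 ^ (Fintype.card ι - 1) * ∫ t in Icc (-1 : ℝ) 1, G t := by
  classical
  rw [← integral_map (by fun_prop) (by rw [map_eval_volume_restrict_cube]; exact hG.smul_measure _),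
    map_eval_volume_restrict_cube, integral_smul_measure]
  simp

theorem integrableOn_cube_comp_eval (i : ι) {G : ℝ → ℝ} (hG : IntegrableOn G (Icc (-1 : ℝ) 1)) :
    IntegrableOn (fun ξ : EuclideanSpace ℝ ι => G (ξ i)) {ξ | ∀ j, |ξ j| ≤ 1} := by
  classical
  have hmap := map_eval_volume_restrict_cube (ι := ι) i
  refine (integrable_map_measure (by rw [hmap]; exact hG.1.smul_measure _) (by fun_prop)).mp ?_
  rw [hmap]
  exact hG.smul_measure (by simp)

theorem ae_restrict_cube_eval_ne_zero (i : ι) :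
    ∀ᵐ ξ ∂volume.restrict {ξ : EuclideanSpace ℝ ι | ∀ j, |ξ j| ≤ 1}, ξ i ≠ 0 := by
  classical
  refine ae_of_ae_map (p := (· ≠ 0)) (by fun_prop) ?_
  rw [map_eval_volume_restrict_cube]
  exact Measure.ae_smul_measure (ae_restrict_of_ae (Measure.ae_ne volume 0)) _

theorem setIntegral_cube_eval_pow_two_mul (i : ι) (l : ℕ) :
    ∫ ξ in {ξ : EuclideanSpace ℝ ι | ∀ j, |ξ j| ≤ 1}, ξ i ^ (2 * l)
      = 2 ^ (Fintype.card ι - 1) * (2 / (2 * (l : ℝ) + 1)) := by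
  have habs (t : ℝ) : t ^ (2 * l) = |t| ^ ((2 * l : ℕ) : ℝ) := by
    rw [Real.rpow_natCast, (even_two_mul l).pow_abs]
  rw [setIntegral_cube_comp_eval i (G := fun t => t ^ (2 * l)) (by fun_prop)]
  simp_rw [habs]
  rw [integral_abs_rpow_Icc_neg_one_one (neg_one_lt_zero.trans_le (Nat.cast_nonneg _))]
  push_cast; rfl

theorem setIntegral_cube_pow_mul_rpow_le (i : ι) (l : ℕ) {S q : ℝ} (hS : 0 ≤ S) (hq0 : 0 ≤ q)
    (hq1 : q < 1) :
    ∫ ξ in {ξ : EuclideanSpace ℝ ι | ∀ j, |ξ j| ≤ 1}, ξ i ^ (2 * l) * (1 + S * ‖ξ‖) ^ (-q)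
      ≤ (1 + S) ^ (-q) * (2 ^ (Fintype.card ι - 1) * (2 / (2 * (l : ℝ) - q + 1))) := by
  have hs : -1 < 2 * (l : ℝ) - q := by linarith [(by positivity : (0 : ℝ) ≤ 2 * l)]
  have hint := integrableOn_abs_rpow_Icc_neg_one_one hs
  -- Only a.e.: on the null hyperplane `ξ i = 0` the bound fails, as `|0| ^ (-q) = 0` for `l = 0`.
  have hbound : ∀ᵐ ξ ∂volume.restrict {ξ : EuclideanSpace ℝ ι | ∀ j, |ξ j| ≤ 1},
      ξ i ^ (2 * l) * (1 + S * ‖ξ‖) ^ (-q) ≤ (1 + S) ^ (-q) * |ξ i| ^ (2 * (l : ℝ) - q) := by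
    filter_upwards [ae_restrict_mem (by measurability), ae_restrict_cube_eval_ne_zero i]
      with ξ hξ hξi
    rw [← (even_two_mul l).pow_abs, ← Real.rpow_natCast]
    push_cast
    exact rpow_mul_one_add_mul_rpow_neg_le (abs_pos.mpr hξi) (hξ i)
      (by simpa using PiLp.norm_apply_le ξ i) hS hq0
  have hnonneg : 0 ≤ᵐ[volume.restrict {ξ : EuclideanSpace ℝ ι | ∀ j, |ξ j| ≤ 1}]
      fun ξ => ξ i ^ (2 * l) * (1 + S * ‖ξ‖) ^ (-q) :=
    ae_of_all _ fun ξ => mul_nonneg ((even_two_mul l).pow_nonneg _) (by positivity)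
  calc _ ≤ ∫ ξ in {ξ : EuclideanSpace ℝ ι | ∀ j, |ξ j| ≤ 1},
          (1 + S) ^ (-q) * |ξ i| ^ (2 * (l : ℝ) - q) :=
        integral_mono_of_nonneg hnonneg ((integrableOn_cube_comp_eval i hint).const_mul _) hbound
    _ = _ := by
        rw [integral_const_mul, setIntegral_cube_comp_eval i hint.aestronglyMeasurable,
          integral_abs_rpow_Icc_neg_one_one hs]

end Cube

theorem stmt_18 (m n : ℕ) (hn : 0 < n) (S : ℝ) (hS : 0 ≤ S) (l : ℕ) :
    (∫ ξ in {ξ : EuclideanSpace ℝ (Fin n) | ∀ j, |ξ j| ≤ 1},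
        (ξ ⟨0, hn⟩) ^ (2 * l) * (1 + S * ‖ξ‖) ^ (-(m : ℝ) / ((m : ℝ) + 2)))
      ≤ (((m : ℝ) + 2) / 2) * (1 + S) ^ (-(m : ℝ) / ((m : ℝ) + 2)) *
          ∫ ξ in {ξ : EuclideanSpace ℝ (Fin n) | ∀ j, |ξ j| ≤ 1}, (ξ ⟨0, hn⟩) ^ (2 * l) := by
  rw [neg_div]
  set q : ℝ := (m : ℝ) / ((m : ℝ) + 2)
  have hq0 : 0 ≤ q := by positivity
  have hq1 : q < 1 := (div_lt_one (by positivity)).mpr (by linarith)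
  have hC : ((m : ℝ) + 2) / 2 = (1 - q)⁻¹ := by
    rw [show 1 - q = 2 / ((m : ℝ) + 2) by simp only [q]; field_simp; ring, inv_div]
  rw [hC, setIntegral_cube_eval_pow_two_mul]
  refine (setIntegral_cube_pow_mul_rpow_le _ l hS hq0 hq1).trans ?_
  have habsorb := two_div_sub_add_one_le hq0 hq1 (by positivity : (0 : ℝ) ≤ 2 * l)
  have hfactor : 0 ≤ (1 + S) ^ (-q) * 2 ^ (Fintype.card (Fin n) - 1) := by positivity
  linarith [mul_le_mul_of_nonneg_left habsorb hfactor]
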